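/- With Y(η) = tanh η, U'(η) = -2 tanh η, Z₁(η) = η U'(η) Y''(η) + 2 U'(η) Y'(η) + 2η Y'''(η) + 6 Y''(η), and Z₂(η) = U'(η) Y''(η) + 2 Y'''(η), the following improper integrals converge and satisfy: ∫_ℝ Z₁(η) U'(η) dη = 8, ∫_ℝ Z₂(η)(η U'(η) + 2) dη = -8, ∫_ℝ Z₂(η) U'(η) dη = 0, and ∫_ℝ Z₁(η)(η U'(η) + 2) dη = 0. -/

import Mathlib

/-!
Write `t = tanh η` and `s = 1 - t² = sech² η`. Then `Y' = s`, `Y'' = -2ts`, `Y''' = (6t² - 2)s`,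
so `Z₂ = (16t² - 4)s` is even and `Z₁ = ηZ₂ - 16ts` is odd, while `U'` is odd and `ηU' + 2`
is even: the integrals of `Z₂ U'` and `Z₁ (ηU' + 2)` vanish by parity. The other two integrands
are the derivatives of the odd functions `4η(1 + 2t²)s + ct + 8t³` with `c = -4` and `c = -12`,
which tend to `c + 8` at `+∞`. All integrands are `O(η² sech² η)`, hence integrable.
-/

open MeasureTheory Real Filter Topology Set Asymptotics

theorem Function.Odd.integral_eq_zero {G E : Type*} [MeasurableSpace G] [AddGroup G]
    [MeasurableNeg G] [NormedAddCommGroup E] [NormedSpace ℝ E] {μ : Measure G} [μ.IsNegInvariant]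
    {f : G → E} (hf : f.Odd) : ∫ x, f x ∂μ = 0 := by
  have h := integral_neg_eq_self f μ
  simp only [hf.eq, integral_neg] at h
  rw [neg_eq_iff_add_eq_zero, ← two_smul ℝ] at h
  exact (smul_eq_zero.mp h).resolve_left two_ne_zero

theorem Function.Odd.tendsto_atBot {β : Type*} [TopologicalSpace β] [AddGroup β]
    [ContinuousNeg β] {F : ℝ → β} {a : β} (hF : F.Odd)
    (h : Tendsto F atTop (𝓝 a)) : Tendsto F atBot (𝓝 (-a)) := by
  have := (h.comp tendsto_neg_atBot_atTop).neg
  exact this.congr fun x => by simp [hF.eq]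

theorem integral_eq_two_mul_of_hasDerivAt_of_odd {F f : ℝ → ℝ} {a : ℝ} (hF : F.Odd)
    (hderiv : ∀ x, HasDerivAt F (f x) x) (hf : Integrable f) (htop : Tendsto F atTop (𝓝 a)) :
    ∫ x, f x = 2 * a := by
  rw [integral_of_hasDerivAt_of_tendsto hderiv hf (hF.tendsto_atBot htop) htop]
  ring

namespace Real

theorem hasDerivAt_tanh (x : ℝ) : HasDerivAt tanh (1 - tanh x ^ 2) x := by
  have h := (hasDerivAt_sinh x).div (hasDerivAt_cosh x) (cosh_pos x).ne'
  rw [show sinh / cosh = tanh from funext fun y => (tanh_eq_sinh_div_cosh y).symm] at h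
  refine h.congr_deriv ?_
  rw [tanh_eq_sinh_div_cosh]
  field_simp

theorem deriv_tanh : deriv tanh = fun x => 1 - tanh x ^ 2 :=
  funext fun x => (hasDerivAt_tanh x).deriv

@[fun_prop]
theorem continuous_tanh : Continuous tanh :=
  continuous_iff_continuousAt.2 fun x => (hasDerivAt_tanh x).continuousAt

theorem one_sub_tanh_sq_nonneg (x : ℝ) : 0 ≤ 1 - tanh x ^ 2 :=
  sub_nonneg.2 (tanh_sq_lt_one x).le

theorem one_sub_tanh_sq_le (x : ℝ) : 1 - tanh x ^ 2 ≤ 4 * exp (-x) ^ 2 := by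
  have hc : exp x / 2 ≤ cosh x := by rw [cosh_eq]; linarith [(exp_pos (-x)).le]
  have h1 : 1 - tanh x ^ 2 = (cosh x ^ 2)⁻¹ := by
    rw [tanh_eq_sinh_div_cosh]
    field_simp [(cosh_pos x).ne']
    linear_combination cosh_sq_sub_sinh_sq x
  have h2 : 4 * exp (-x) ^ 2 = ((exp x / 2) ^ 2)⁻¹ := by
    rw [exp_neg]
    field_simp
    norm_num
  rw [h1, h2]
  gcongr

theorem isLittleO_pow_mul_one_sub_tanh_sq_atTop (k : ℕ) :
    (fun x => x ^ k * (1 - tanh x ^ 2)) =o[atTop] fun x => exp (-x) := by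
  have hpow : (fun x : ℝ => x ^ k) =o[atTop] fun x => exp x := by
    simpa using isLittleO_pow_exp_pos_mul_atTop k one_pos
  have hs : (fun x => 1 - tanh x ^ 2) =O[atTop] fun x => exp (-x) ^ 2 := by
    refine IsBigO.of_bound 4 (Eventually.of_forall fun x => ?_)
    rw [norm_of_nonneg (one_sub_tanh_sq_nonneg x), norm_of_nonneg (by positivity)]
    exact one_sub_tanh_sq_le x
  refine (hpow.mul_isBigO hs).congr_right fun x => ?_
  rw [sq, ← mul_assoc, ← exp_add]
  simp

theorem tendsto_pow_mul_one_sub_tanh_sq_atTop (k : ℕ) :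
    Tendsto (fun x => x ^ k * (1 - tanh x ^ 2)) atTop (𝓝 0) :=
  (isLittleO_pow_mul_one_sub_tanh_sq_atTop k).isBigO.trans_tendsto tendsto_exp_neg_atTop_nhds_zero

theorem tendsto_tanh_atTop : Tendsto tanh atTop (𝓝 1) := by
  have hsq : Tendsto (fun x => tanh x ^ 2) atTop (𝓝 1) := by
    simpa using (tendsto_pow_mul_one_sub_tanh_sq_atTop 0).const_sub 1
  refine tendsto_of_tendsto_of_tendsto_of_le_of_le' hsq tendsto_const_nhds ?_
    (Eventually.of_forall fun x => (tanh_lt_one x).le)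
  filter_upwards [eventually_ge_atTop 0] with x hx
  have h0 : 0 ≤ tanh x := by
    rw [tanh_eq_sinh_div_cosh]
    exact div_nonneg (sinh_nonneg_iff.2 hx) (cosh_pos x).le
  nlinarith [tanh_lt_one x]

theorem integrable_pow_mul_one_sub_tanh_sq (k : ℕ) :
    Integrable fun x => x ^ k * (1 - tanh x ^ 2) := by
  refine Continuous.locallyIntegrable (by fun_prop)
    |>.integrable_of_isBigO_atTop_of_norm_isNegInvariant ?_
      (isLittleO_pow_mul_one_sub_tanh_sq_atTop k).isBigO ?_
  · exact Eventually.of_forall fun x => by simp [tanh_neg]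
  · exact ⟨Ioi 0, Ioi_mem_atTop 0, by simpa using exp_neg_integrableOn_Ioi 0 one_pos⟩

theorem integrable_comp_tanh_mul_pow_mul_one_sub_tanh_sq (k : ℕ) {g : ℝ → ℝ}
    (hg : Continuous g) : Integrable fun x => g (tanh x) * (x ^ k * (1 - tanh x ^ 2)) := by
  obtain ⟨C, hC⟩ := isCompact_Icc.exists_bound_of_continuousOn (hg.continuousOn (s := Icc (-1) 1))
  exact (integrable_pow_mul_one_sub_tanh_sq k).bdd_mul (by fun_prop)
    (Eventually.of_forall fun x => hC _ ⟨(neg_one_lt_tanh x).le, (tanh_lt_one x).le⟩)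

theorem deriv_one_sub_tanh_sq :
    deriv (fun x => 1 - tanh x ^ 2) = fun x => -2 * tanh x * (1 - tanh x ^ 2) := by
  funext x
  refine (((hasDerivAt_tanh x).pow 2).const_sub 1).deriv.trans ?_
  ring

theorem deriv_neg_two_mul_tanh_mul_one_sub_tanh_sq :
    deriv (fun x => -2 * tanh x * (1 - tanh x ^ 2))
      = fun x => (6 * tanh x ^ 2 - 2) * (1 - tanh x ^ 2) := by
  funext x
  refine ((((hasDerivAt_tanh x).const_mul (-2)).mul
    (((hasDerivAt_tanh x).pow 2).const_sub 1)).deriv).trans ?_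
  simp only [Pi.pow_apply]
  ring

end Real

namespace Liouville

noncomputable def u' (η : ℝ) : ℝ := -2 * tanh η

noncomputable def z₂ (η : ℝ) : ℝ := (16 * tanh η ^ 2 - 4) * (1 - tanh η ^ 2)

noncomputable def z₁ (η : ℝ) : ℝ := η * z₂ η - 16 * tanh η * (1 - tanh η ^ 2)

noncomputable def modulationIntegrand (c η : ℝ) : ℝ :=
  (-2 * η * tanh η * (16 * tanh η ^ 2 - 4) + (c + 4 + 32 * tanh η ^ 2)) * (1 - tanh η ^ 2)

theorem z₁_mul_u' : (fun η => z₁ η * u' η) = modulationIntegrand (-4) := by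
  funext η
  simp only [z₁, z₂, u', modulationIntegrand]
  ring

theorem z₂_mul_id_mul_u'_add_two :
    (fun η => z₂ η * (η * u' η + 2)) = modulationIntegrand (-12) := by
  funext η
  simp only [z₂, u', modulationIntegrand]
  ring

theorem hasDerivAt_modulationPrimitive (c η : ℝ) :
    HasDerivAt (fun η => 4 * η * (1 + 2 * tanh η ^ 2) * (1 - tanh η ^ 2) + c * tanh η
      + 8 * tanh η ^ 3) (modulationIntegrand c η) η := by
  have ht := hasDerivAt_tanh η
  have h := ((((hasDerivAt_id η).const_mul 4).mul ((ht.pow 2).const_mul 2 |>.const_add 1)).mul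
    ((ht.pow 2).const_sub 1)).add (ht.const_mul c) |>.add ((ht.pow 3).const_mul 8)
  refine h.congr_deriv ?_
  simp only [modulationIntegrand, Pi.mul_apply, Pi.pow_apply, id]
  push_cast
  ring

theorem integrable_modulationIntegrand (c : ℝ) : Integrable (modulationIntegrand c) := by
  refine ((integrable_comp_tanh_mul_pow_mul_one_sub_tanh_sq 1
    (g := fun t => -2 * t * (16 * t ^ 2 - 4)) (by fun_prop)).add
    (integrable_comp_tanh_mul_pow_mul_one_sub_tanh_sq 0
    (g := fun t => c + 4 + 32 * t ^ 2) (by fun_prop))).congr (Eventually.of_forall fun η => ?_)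
  simp only [modulationIntegrand, Pi.add_apply]
  ring

theorem integral_modulationIntegrand (c : ℝ) : ∫ η, modulationIntegrand c η = 2 * (c + 8) := by
  refine integral_eq_two_mul_of_hasDerivAt_of_odd (fun η => ?_) (hasDerivAt_modulationPrimitive c)
    (integrable_modulationIntegrand c) ?_
  · simp only [tanh_neg]
    ring
  · have h := ((((tendsto_pow_mul_one_sub_tanh_sq_atTop 1).const_mul 4).mul
      ((tendsto_tanh_atTop.pow 2).const_mul 2 |>.const_add 1)).add
      (tendsto_tanh_atTop.const_mul c)).add ((tendsto_tanh_atTop.pow 3).const_mul 8)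
    convert h using 2 <;> ring

theorem integrable_z₁_mul_u' : Integrable fun η => z₁ η * u' η :=
  z₁_mul_u' ▸ integrable_modulationIntegrand _

theorem integrable_z₂_mul_id_mul_u'_add_two : Integrable fun η => z₂ η * (η * u' η + 2) :=
  z₂_mul_id_mul_u'_add_two ▸ integrable_modulationIntegrand _

theorem integral_z₁_mul_u' : ∫ η, z₁ η * u' η = 8 := by
  rw [z₁_mul_u', integral_modulationIntegrand]
  norm_num

theorem integral_z₂_mul_id_mul_u'_add_two : ∫ η, z₂ η * (η * u' η + 2) = -8 := by
  rw [z₂_mul_id_mul_u'_add_two, integral_modulationIntegrand]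
  norm_num

theorem integrable_z₂_mul_u' : Integrable fun η => z₂ η * u' η := by
  refine (integrable_comp_tanh_mul_pow_mul_one_sub_tanh_sq 0
    (g := fun t => -2 * t * (16 * t ^ 2 - 4)) (by fun_prop)).congr
    (Eventually.of_forall fun η => ?_)
  simp only [z₂, u']
  ring

theorem integrable_z₁_mul_id_mul_u'_add_two :
    Integrable fun η => z₁ η * (η * u' η + 2) := by
  refine (((integrable_comp_tanh_mul_pow_mul_one_sub_tanh_sq 2
    (g := fun t => -2 * t * (16 * t ^ 2 - 4)) (by fun_prop)).add
    (integrable_comp_tanh_mul_pow_mul_one_sub_tanh_sq 1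
    (g := fun t => 64 * t ^ 2 - 8) (by fun_prop))).add
    (integrable_comp_tanh_mul_pow_mul_one_sub_tanh_sq 0
    (g := fun t => -32 * t) (by fun_prop))).congr (Eventually.of_forall fun η => ?_)
  simp only [z₁, z₂, u', Pi.add_apply]
  ring

theorem integral_z₂_mul_u' : ∫ η, z₂ η * u' η = 0 :=
  Function.Odd.integral_eq_zero fun η => by simp only [z₂, u', tanh_neg]; ring

theorem integral_z₁_mul_id_mul_u'_add_two : ∫ η, z₁ η * (η * u' η + 2) = 0 :=
  Function.Odd.integral_eq_zero fun η => by simp only [z₁, z₂, u', tanh_neg]; ring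

end Liouville

open Liouville

/-- With `Y = tanh`, `U'(η) = -2 tanh η`,
`Z₁ = η U' Y'' + 2 U' Y' + 2η Y''' + 6 Y''` and `Z₂ = U' Y'' + 2 Y'''`, the integrals
`∫ Z₁ U' = 8`, `∫ Z₂ (η U' + 2) = -8`, `∫ Z₂ U' = 0`, `∫ Z₁ (η U' + 2) = 0`,
all integrals being convergent. -/
theorem liouville_modulation_projections (U' Y Z₁ Z₂ : ℝ → ℝ)
    (hU' : ∀ η, U' η = -2 * Real.tanh η)
    (hY : ∀ η, Y η = Real.tanh η)
    (hZ₁ : ∀ η, Z₁ η = η * U' η * deriv (deriv Y) η + 2 * U' η * deriv Y η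
      + 2 * η * deriv (deriv (deriv Y)) η + 6 * deriv (deriv Y) η)
    (hZ₂ : ∀ η, Z₂ η = U' η * deriv (deriv Y) η + 2 * deriv (deriv (deriv Y)) η) :
    Integrable (fun η => Z₁ η * U' η) ∧
    Integrable (fun η => Z₂ η * (η * U' η + 2)) ∧
    Integrable (fun η => Z₂ η * U' η) ∧
    Integrable (fun η => Z₁ η * (η * U' η + 2)) ∧
    (∫ η : ℝ, Z₁ η * U' η) = 8 ∧
    (∫ η : ℝ, Z₂ η * (η * U' η + 2)) = -8 ∧
    (∫ η : ℝ, Z₂ η * U' η) = 0 ∧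
    (∫ η : ℝ, Z₁ η * (η * U' η + 2)) = 0 := by
  obtain rfl : Y = tanh := funext hY
  obtain rfl : U' = u' := funext hU'
  simp only [deriv_tanh, deriv_one_sub_tanh_sq, deriv_neg_two_mul_tanh_mul_one_sub_tanh_sq]
    at hZ₁ hZ₂
  obtain rfl : Z₂ = z₂ := funext fun η => by rw [hZ₂, z₂, u']; ring
  obtain rfl : Z₁ = z₁ := funext fun η => by rw [hZ₁, z₁, z₂, u']; ring
  exact ⟨integrable_z₁_mul_u', integrable_z₂_mul_id_mul_u'_add_two, integrable_z₂_mul_u',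
    integrable_z₁_mul_id_mul_u'_add_two, integral_z₁_mul_u', integral_z₂_mul_id_mul_u'_add_two,
    integral_z₂_mul_u', integral_z₁_mul_id_mul_u'_add_two⟩
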